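/- arXiv:1401.2290 — 3 statements merged into one kernel-verified Lean document; each statement's English description precedes it below -/
import Mathlib

section
/- Let X be any k-dimensional simplicial complex on a finite vertex set V, let V = A_0 ⊔ … ⊔ A_k be a partition into nonempty parts, and let f ∈ C^{k−1}(X;ℝ) be the associated cochain (with the partition-adapted linear order on V). Then ⟨L^up_{k−1}(X)f, f⟩ = ⟨δ_{k−1}f, δ_{k−1}f⟩ = |V|²·|F(A_0,…,A_k)|. -/
open Finset

namespace HigherCheeger

variable {V : Type*} [DecidableEq V] [Fintype V] [LinearOrder V]

/-- An abstract simplicial complex: a family of finite subsets of `V`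
closed under taking subsets. -/
def IsComplex (X : Finset (Finset V)) : Prop :=
  ∀ σ ∈ X, ∀ τ ⊆ σ, τ ∈ X

/-- `X` is `k`-dimensional: every face has at most `k+1` vertices
and some face has exactly `k+1` vertices. -/
def IsDim (X : Finset (Finset V)) (k : ℕ) : Prop :=
  (∀ σ ∈ X, σ.card ≤ k + 1) ∧ ∃ σ ∈ X, σ.card = k + 1

/-- The faces of `X` of cardinality `c` (i.e. of dimension `c - 1`). -/
def faces (X : Finset (Finset V)) (c : ℕ) : Finset (Finset V) :=
  X.filter fun σ => σ.card = c

/-- `X` has complete `(k-1)`-skeleton: every subset of `V` of size at most `k` is a face. -/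
def CompleteSkeleton (X : Finset (Finset V)) (k : ℕ) : Prop :=
  ∀ σ : Finset V, σ.card ≤ k → σ ∈ X

/-- The `k`-dimensional completion `K(X)`. -/
def completion (X : Finset (Finset V)) (k : ℕ) : Finset (Finset V) :=
  X ∪ (Finset.univ.filter fun τ : Finset V => τ.card = k + 1 ∧ ∀ v ∈ τ, τ.erase v ∈ X)

/-- The complete `k`-dimensional complex `K_n^k` on the vertex set `V`. -/
def completeComplex (V : Type*) [DecidableEq V] [Fintype V] (k : ℕ) : Finset (Finset V) :=
  Finset.univ.filter fun σ : Finset V => σ.card ≤ k + 1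

/-- The oriented incidence number `[τ:σ]` (with respect to the linear order on `V`):
`(-1)^j` if `σ = τ \ {v_j}` where `v_j` is the `j`-th smallest vertex of `τ`, and `0` otherwise. -/
def incidence (τ σ : Finset V) : ℝ :=
  if σ ⊆ τ ∧ σ.card + 1 = τ.card then
    ∑ v ∈ τ \ σ, (-1 : ℝ) ^ (τ.filter fun w => w < v).card
  else 0

/-- The real coboundary operator `δ` applied to a cochain living on the faces of
cardinality `c`; the result lives on faces of cardinality `c + 1`. -/
def delta (X : Finset (Finset V)) (c : ℕ) (f : Finset V → ℝ) : Finset V → ℝ :=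
  fun τ => ∑ σ ∈ faces X c, incidence τ σ * f σ

/-- The real boundary operator `∂` (the adjoint of `δ`) applied to a cochain living
on the faces of cardinality `c`; the result lives on faces of cardinality `c - 1`. -/
def bdry (X : Finset (Finset V)) (c : ℕ) (f : Finset V → ℝ) : Finset V → ℝ :=
  fun σ => ∑ τ ∈ faces X c, incidence τ σ * f τ

/-- The inner product of two cochains on the faces of cardinality `c`. -/
def inn (X : Finset (Finset V)) (c : ℕ) (f g : Finset V → ℝ) : ℝ :=
  ∑ σ ∈ faces X c, f σ * g σ

/-- The upper Laplacian `L^up_{k-1} = ∂_k δ_{k-1}` acting on `(k-1)`-cochains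
(functions on faces of cardinality `k`). -/
def lapUp (X : Finset (Finset V)) (k : ℕ) (f : Finset V → ℝ) : Finset V → ℝ :=
  bdry X (k + 1) (delta X k f)

/-- The lower Laplacian `L^down_{k-1} = δ_{k-2} ∂_{k-1}` acting on `(k-1)`-cochains. -/
def lapDown (X : Finset (Finset V)) (k : ℕ) (f : Finset V → ℝ) : Finset V → ℝ :=
  delta X (k - 1) (bdry X k f)

/-- `f ∈ Z_{k-1}(X;ℝ) = ker ∂_{k-1}`. -/
def IsCycle (X : Finset (Finset V)) (k : ℕ) (f : Finset V → ℝ) : Prop :=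
  ∀ σ : Finset V, bdry X k f σ = 0

/-- `f ∈ B^{k-1}(X;ℝ) = im δ_{k-2}` (as a cochain, i.e. on the `(k-1)`-faces). -/
def IsCobdry (X : Finset (Finset V)) (k : ℕ) (f : Finset V → ℝ) : Prop :=
  ∃ g : Finset V → ℝ, ∀ σ ∈ faces X k, f σ = delta X (k - 1) g σ

/-- The spectral gap `λ(X)`: the minimum of the Rayleigh quotient
`⟨L^up_{k-1}(X) f, f⟩ / ⟨f, f⟩` over nonzero `f ∈ Z_{k-1}(X;ℝ)`. -/
noncomputable def spectralGap (X : Finset (Finset V)) (k : ℕ) : ℝ :=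
  sInf {r : ℝ | ∃ f : Finset V → ℝ, IsCycle X k f ∧ inn X k f f ≠ 0 ∧
    r = inn X k (lapUp X k f) f / inn X k f f}

/-- A partition of `V` into `m` (nonempty) parts. -/
def IsPartition {m : ℕ} (A : Fin m → Finset V) : Prop :=
  (∀ i, (A i).Nonempty) ∧ ∀ v : V, ∃! i, v ∈ A i

/-- The linear order on `V` is adapted to the family of parts `A`. -/
def OrderAdapted {m : ℕ} (A : Fin m → Finset V) : Prop :=
  ∀ i j : Fin m, i < j → ∀ v ∈ A i, ∀ w ∈ A j, v < w

/-- `F(A_0,…,A_k)`: the `k`-faces of `X` with exactly one vertex in each part. -/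
def Fset (X : Finset (Finset V)) (k : ℕ) (A : Fin (k + 1) → Finset V) : Finset (Finset V) :=
  (faces X (k + 1)).filter fun τ => ∀ i, (τ ∩ A i).card = 1

/-- `F^∂(A_0,…,A_k)`: the `(k+1)`-element members of `K(X)` with exactly one vertex
in each part. -/
def Fpar (X : Finset (Finset V)) (k : ℕ) (A : Fin (k + 1) → Finset V) : Finset (Finset V) :=
  (faces (completion X k) (k + 1)).filter fun τ => ∀ i, (τ ∩ A i).card = 1

/-- The value `|V|·|F(A_0,…,A_k)| / |F^∂(A_0,…,A_k)|` of a partition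
(`⊤` if the denominator is `0`). -/
noncomputable def cheegerVal (X : Finset (Finset V)) (k : ℕ) (A : Fin (k + 1) → Finset V) :
    EReal :=
  if (Fpar X k A).card = 0 then ⊤
  else (((Fintype.card V * (Fset X k A).card : ℝ) / ((Fpar X k A).card : ℝ) : ℝ) : EReal)

/-- The Cheeger constant `h(X)`. -/
noncomputable def cheeger (X : Finset (Finset V)) (k : ℕ) : EReal :=
  sInf {r : EReal | ∃ A : Fin (k + 1) → Finset V, IsPartition A ∧ r = cheegerVal X k A}

/-- `d(σ)`: the number of members of `F^∂(A_0,…,A_k)` containing `σ`. -/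
def degPar (X : Finset (Finset V)) (k : ℕ) (A : Fin (k + 1) → Finset V) (σ : Finset V) : ℕ :=
  ((Fpar X k A).filter fun τ => σ ⊆ τ).card

/-- `C(X)` (with respect to the partition `A`):
the maximum over `τ ∈ F^∂(A_0,…,A_k)` of `∑_{v ∈ τ} d(τ \ {v})`. -/
def Cconst (X : Finset (Finset V)) (k : ℕ) (A : Fin (k + 1) → Finset V) : ℕ :=
  (Fpar X k A).sup fun τ => ∑ v ∈ τ, degPar X k A (τ.erase v)

/-- The cochain associated to a partition `A`: `σ ↦ (-1)^l·|A_l|` if `A_l` is the unique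
part disjoint from `σ`, and `0` otherwise. -/
def assocCochain {k : ℕ} (A : Fin (k + 1) → Finset V) (σ : Finset V) : ℝ :=
  if (Finset.univ.filter fun l => σ ∩ A l = ∅).card = 1 then
    ∑ l ∈ Finset.univ.filter fun l => σ ∩ A l = ∅, (-1 : ℝ) ^ (l : ℕ) * ((A l).card : ℝ)
  else 0

/-- The `Z₂`-coboundary: a `(c-1)`-cochain `f` is sent to
`τ ↦ ∑_{v ∈ τ} f (τ \ {v})`. -/
def deltaZ2 (f : Finset V → ZMod 2) (τ : Finset V) : ZMod 2 :=
  ∑ v ∈ τ, f (τ.erase v)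

/-- The support of the `Z₂`-coboundary of `f` in `X`: the faces of `X` of cardinality
`k + 1` on which the `Z₂`-coboundary of `f` is nonzero.  Its cardinality is `|δ_X f|`. -/
def suppDelta (X : Finset (Finset V)) (k : ℕ) (f : Finset V → ZMod 2) : Finset (Finset V) :=
  (faces X (k + 1)).filter fun τ => deltaZ2 f τ ≠ 0

/-- `F(A_0,…,A_{k-1})`: the `(k-1)`-faces of `X` with exactly one vertex in each of
the `k` parts. -/
def FsetLow (X : Finset (Finset V)) (k : ℕ) (A : Fin k → Finset V) : Finset (Finset V) :=
  (faces X k).filter fun σ => ∀ i, (σ ∩ A i).card = 1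

/-- The Cheeger-type constant `h'(X)`. -/
noncomputable def cheeger' (X : Finset (Finset V)) (k : ℕ) : EReal :=
  sInf {r : EReal | ∃ (A : Fin k → Finset V) (f : Finset V → ZMod 2),
    IsPartition A ∧ (∀ σ, f σ ≠ 0 → σ ∈ FsetLow X k A) ∧
    r = if (suppDelta (completion X k) k f).card = 0 then (⊤ : EReal)
        else (((Fintype.card V * (suppDelta X k f).card : ℝ) /
              ((suppDelta (completion X k) k f).card : ℝ) : ℝ) : EReal)}

/-- The Hamming norm of a `Z₂`-cochain on the faces of cardinality `c`. -/
def hamming (X : Finset (Finset V)) (c : ℕ) (f : Finset V → ZMod 2) : ℕ :=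
  ((faces X c).filter fun σ => f σ ≠ 0).card

/-- `|[f]|`: the minimum Hamming norm of `f + δ_X g` over `g ∈ C^{k-2}(X;Z₂)`. -/
noncomputable def normClass (X : Finset (Finset V)) (k : ℕ) (f : Finset V → ZMod 2) : ℕ :=
  sInf {m : ℕ | ∃ g : Finset V → ZMod 2, m = hamming X k fun σ => f σ + deltaZ2 g σ}

/-- The coboundary expansion `φ(X) = min_f |δ_X f| / |[f]|` (quotients with denominator
`0` are `∞`). -/
noncomputable def phi (X : Finset (Finset V)) (k : ℕ) : EReal :=
  sInf {r : EReal | ∃ f : Finset V → ZMod 2,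
    r = if normClass X k f = 0 then (⊤ : EReal)
        else ((((suppDelta X k f).card : ℝ) / (normClass X k f : ℝ) : ℝ) : EReal)}

/-- `h̃(X) = min_f |V|·|δ_X f| / |δ_{K(X)} f|` (quotients with denominator `0` are `∞`). -/
noncomputable def htilde (X : Finset (Finset V)) (k : ℕ) : EReal :=
  sInf {r : EReal | ∃ f : Finset V → ZMod 2,
    r = if (suppDelta (completion X k) k f).card = 0 then (⊤ : EReal)
        else (((Fintype.card V * (suppDelta X k f).card : ℝ) /
              ((suppDelta (completion X k) k f).card : ℝ) : ℝ) : EReal)}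

/-! The coboundary of `f` at a `k`-face `τ` is `∑_{v ∈ τ} ± f (τ \ v)`. If `τ` meets every part
once, `τ \ v` misses exactly the part of `v`, whose index is the position of `v` in `τ` because the
order is adapted; the two signs cancel and the terms add up to `∑ |A_l| = |V|`. Otherwise
`f (τ \ v) ≠ 0` for at most two vertices `u < w` of one part; then `u` and `w` are adjacent in `τ`
and their terms cancel. The first equality is the adjointness of `∂` and `δ`. -/

section Coboundary

variable {V : Type*} [DecidableEq V]

theorem image_erase_subset_faces {X : Finset (Finset V)} (hX : IsComplex X) {c : ℕ}
    {τ : Finset V} (hτX : τ ∈ X) (hτ : #τ = c + 1) : τ.image τ.erase ⊆ faces X c := by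
  intro σ hσ
  obtain ⟨v, hv, rfl⟩ := mem_image.mp hσ
  exact mem_filter.mpr ⟨hX τ hτX _ (erase_subset v τ), by rw [card_erase_of_mem hv, hτ]; rfl⟩

variable [LinearOrder V]

theorem inn_bdry_eq_inn_delta (X : Finset (Finset V)) (c : ℕ) (f g : Finset V → ℝ) :
    inn X c (bdry X (c + 1) g) f = inn X (c + 1) g (delta X c f) := by
  simp only [inn, bdry, delta, sum_mul, mul_sum]
  rw [sum_comm]
  exact sum_congr rfl fun _ _ => sum_congr rfl fun _ _ => by ring

theorem inn_lapUp_self (X : Finset (Finset V)) (k : ℕ) (f : Finset V → ℝ) :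
    inn X k (lapUp X k f) f = inn X (k + 1) (delta X k f) (delta X k f) :=
  inn_bdry_eq_inn_delta X k f (delta X k f)

theorem incidence_erase {τ : Finset V} {v : V} (hv : v ∈ τ) :
    incidence τ (τ.erase v) = (-1) ^ #{w ∈ τ | w < v} := by
  rw [incidence, if_pos ⟨erase_subset v τ, card_erase_add_one hv⟩, sdiff_erase_self hv,
    sum_singleton]

theorem incidence_eq_zero_of_notMem_image_erase {τ σ : Finset V}
    (hσ : σ ∉ τ.image τ.erase) : incidence τ σ = 0 := by
  refine if_neg fun h => hσ ?_
  obtain ⟨v, hv, rfl⟩ := exists_eq_insert_iff.mpr h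
  exact mem_image.mpr ⟨v, mem_insert_self v σ, erase_insert hv⟩

theorem delta_eq_sum_erase {X : Finset (Finset V)} (hX : IsComplex X) {c : ℕ}
    {τ : Finset V} (hτX : τ ∈ X) (hτ : #τ = c + 1) (f : Finset V → ℝ) :
    delta X c f τ = ∑ v ∈ τ, (-1) ^ #{w ∈ τ | w < v} * f (τ.erase v) := by
  rw [delta, ← sum_subset (image_erase_subset_faces hX hτX hτ) fun σ _ hσ => by
      rw [incidence_eq_zero_of_notMem_image_erase hσ, zero_mul],
    sum_image fun _ hx _ hy h => erase_injOn τ hx hy h]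
  exact sum_congr rfl fun v hv => by rw [incidence_erase hv]

end Coboundary

theorem image_erase_eq_of_apply_eq {α β : Type*} [DecidableEq α] [DecidableEq β] {f : α → β}
    {s : Finset α} {u w : α} (hw : w ∈ s) (hne : u ≠ w) (h : f u = f w) :
    (s.erase u).image f = s.image f := by
  refine Subset.antisymm (image_subset_image (erase_subset u s)) fun i hi => ?_
  obtain ⟨x, hx, rfl⟩ := mem_image.mp hi
  by_cases hxu : x = u
  · exact mem_image.mpr ⟨w, mem_erase.mpr ⟨hne.symm, hw⟩, hxu ▸ h.symm⟩
  · exact mem_image_of_mem f (mem_erase.mpr ⟨hxu, hx⟩)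

theorem image_erase_of_injOn {α β : Type*} [DecidableEq α] [DecidableEq β] {f : α → β}
    {s : Finset α} {a : α} (hinj : Set.InjOn f s) (ha : a ∈ s) :
    (s.erase a).image f = (s.image f).erase (f a) := by
  ext b
  simp only [mem_image, mem_erase]
  constructor
  · rintro ⟨x, ⟨hxa, hx⟩, rfl⟩
    exact ⟨fun h => hxa (hinj hx ha h), x, hx, rfl⟩
  · rintro ⟨hb, x, hx, rfl⟩
    exact ⟨x, ⟨fun h => hb (h ▸ rfl), hx⟩, rfl⟩

theorem image_eq_univ_of_injOn {α β : Type*} [DecidableEq β] [Fintype β] {f : α → β}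
    {s : Finset α} (hinj : Set.InjOn f s) (hs : #s = Fintype.card β) : s.image f = univ :=
  eq_univ_of_card _ (by rw [card_image_of_injOn hinj, hs])

theorem card_filter_lt_eq_succ_of_adjacent {α : Type*} [LinearOrder α] {s : Finset α}
    {u w : α} (hu : u ∈ s) (huw : u < w) (hgap : ∀ x ∈ s, u < x → w ≤ x) :
    #{x ∈ s | x < w} = #{x ∈ s | x < u} + 1 := by
  have : {x ∈ s | x < w} = insert u {x ∈ s | x < u} := by
    ext x
    simp only [mem_filter, mem_insert]
    constructor
    · rintro ⟨hx, hxw⟩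
      rcases lt_trichotomy x u with h | rfl | h
      · exact Or.inr ⟨hx, h⟩
      · exact Or.inl rfl
      · exact absurd (hgap x hx h) (not_le.mpr hxw)
    · rintro (rfl | ⟨hx, hxu⟩)
      · exact ⟨hu, huw⟩
      · exact ⟨hx, hxu.trans huw⟩
  rw [this, card_insert_of_notMem (by simp)]

section Partition

variable {V : Type*} {m : ℕ} {A : Fin m → Finset V}

noncomputable def IsPartition.part (hA : IsPartition A) (v : V) : Fin m :=
  (hA.2 v).choose

theorem IsPartition.mem_iff_part_eq (hA : IsPartition A) {v : V} {i : Fin m} :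
    v ∈ A i ↔ hA.part v = i :=
  ⟨fun h => ((hA.2 v).choose_spec.2 i h).symm, fun h => h ▸ (hA.2 v).choose_spec.1⟩

theorem IsPartition.mem_part (hA : IsPartition A) (v : V) : v ∈ A (hA.part v) :=
  hA.mem_iff_part_eq.mpr rfl

theorem IsPartition.sum_card [Fintype V] (hA : IsPartition A) :
    ∑ i, #(A i) = Fintype.card V := by
  rw [← card_univ, card_eq_sum_card_fiberwise fun v _ => mem_univ (hA.part v)]
  exact sum_congr rfl fun i _ => congrArg card (by ext v; simp [hA.mem_iff_part_eq])

theorem IsPartition.injOn_part_iff [DecidableEq V] (hA : IsPartition A) {τ : Finset V}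
    (hτ : #τ = m) : Set.InjOn hA.part τ ↔ ∀ i, #(τ ∩ A i) = 1 := by
  constructor
  · intro hinj i
    obtain ⟨v, hv, rfl⟩ := mem_image.mp
      (image_eq_univ_of_injOn hinj (by rw [hτ, Fintype.card_fin]) ▸ mem_univ i)
    refine card_eq_one.mpr ⟨v, ext fun x => ?_⟩
    simp only [mem_inter, mem_singleton, hA.mem_iff_part_eq]
    constructor
    · exact fun ⟨hx, hpx⟩ => hinj hx hv hpx
    · rintro rfl
      exact ⟨hv, rfl⟩
  · intro h x hx y hy hxy
    exact card_le_one.mp (h (hA.part x)).le x (mem_inter.mpr ⟨hx, hA.mem_part x⟩)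
      y (mem_inter.mpr ⟨hy, hA.mem_iff_part_eq.mpr hxy.symm⟩)

variable [LinearOrder V]

theorem OrderAdapted.monotone_part (hord : OrderAdapted A) (hA : IsPartition A) :
    Monotone hA.part := fun v w hvw => not_lt.mp fun h =>
  (hord _ _ h w (hA.mem_part w) v (hA.mem_part v)).not_ge hvw

theorem OrderAdapted.card_filter_lt_eq_part (hord : OrderAdapted A) (hA : IsPartition A)
    {τ : Finset V} (hτ : #τ = m) (hinj : Set.InjOn hA.part τ) {v : V} (hv : v ∈ τ) :
    #{w ∈ τ | w < v} = hA.part v := by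
  have hmono := ((hord.monotone_part hA).monotoneOn τ).strictMonoOn_of_injOn hinj
  have himg : {w ∈ τ | w < v}.image hA.part = Iio (hA.part v) := by
    ext i
    simp only [mem_image, mem_filter, mem_Iio]
    constructor
    · rintro ⟨w, ⟨hw, hwv⟩, rfl⟩
      exact hmono hw hv hwv
    · intro hi
      obtain ⟨w, hw, rfl⟩ := mem_image.mp
        (image_eq_univ_of_injOn hinj (by rw [hτ, Fintype.card_fin]) ▸ mem_univ i)
      exact ⟨w, ⟨hw, (hmono.lt_iff_lt hw hv).mp hi⟩, rfl⟩
  rw [← card_image_of_injOn (hinj.mono (filter_subset _ τ)), himg, Fin.card_Iio]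

end Partition

section AssocCochain

variable {V : Type*} [DecidableEq V] {k : ℕ} {A : Fin (k + 1) → Finset V}

theorem assocCochain_eq (hA : IsPartition A) (σ : Finset V) :
    assocCochain A σ = if #(σ.image hA.part)ᶜ = 1 then
      ∑ l ∈ (σ.image hA.part)ᶜ, (-1) ^ (l : ℕ) * (#(A l) : ℝ) else 0 := by
  have : (univ.filter fun l => σ ∩ A l = ∅) = (σ.image hA.part)ᶜ := by
    ext l
    simp [eq_empty_iff_forall_notMem, hA.mem_iff_part_eq]
  rw [assocCochain, this]

theorem assocCochain_congr_image (hA : IsPartition A) {σ σ' : Finset V}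
    (h : σ.image hA.part = σ'.image hA.part) : assocCochain A σ = assocCochain A σ' := by
  rw [assocCochain_eq hA, assocCochain_eq hA, h]

theorem assocCochain_eq_of_compl_image_eq_singleton (hA : IsPartition A) {σ : Finset V}
    {i : Fin (k + 1)} (h : (σ.image hA.part)ᶜ = {i}) :
    assocCochain A σ = (-1) ^ (i : ℕ) * #(A i) := by
  rw [assocCochain_eq hA, h, if_pos (card_singleton i), sum_singleton]

theorem assocCochain_eq_zero_of_not_injOn (hA : IsPartition A) {σ : Finset V}
    (hσ : #σ ≤ k) (h : ¬ Set.InjOn hA.part σ) : assocCochain A σ = 0 := by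
  rw [assocCochain_eq hA, if_neg]
  intro h1
  have hcompl := card_compl (σ.image hA.part)
  rw [h1, Fintype.card_fin] at hcompl
  exact h (card_image_iff.mp (le_antisymm card_image_le (by omega)))

variable [LinearOrder V]

theorem sum_erase_assocCochain_of_injOn [Fintype V] (hA : IsPartition A)
    (hord : OrderAdapted A) {τ : Finset V} (hτ : #τ = k + 1) (hinj : Set.InjOn hA.part τ) :
    ∑ v ∈ τ, (-1) ^ #{w ∈ τ | w < v} * assocCochain A (τ.erase v) = Fintype.card V := by
  have himg := image_eq_univ_of_injOn hinj (by rw [hτ, Fintype.card_fin])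
  have hterm : ∀ v ∈ τ,
      (-1) ^ #{w ∈ τ | w < v} * assocCochain A (τ.erase v) = (#(A (hA.part v)) : ℝ) := by
    intro v hv
    have hcompl : ((τ.erase v).image hA.part)ᶜ = {hA.part v} := by
      rw [image_erase_of_injOn hinj hv, himg, compl_erase, compl_univ, insert_empty]
    rw [assocCochain_eq_of_compl_image_eq_singleton hA hcompl,
      hord.card_filter_lt_eq_part hA hτ hinj hv, ← mul_assoc, ← pow_add,
      Even.neg_one_pow ⟨_, rfl⟩, one_mul]
  rw [sum_congr rfl hterm, ← sum_image (g := hA.part) (f := fun i => (#(A i) : ℝ)) hinj, himg,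
    ← Nat.cast_sum, hA.sum_card]

theorem sum_erase_assocCochain_of_collision (hA : IsPartition A) (hord : OrderAdapted A)
    {τ : Finset V} (hτ : #τ = k + 1) {u w : V} (hu : u ∈ τ) (hw : w ∈ τ) (huw : u < w)
    (hp : hA.part u = hA.part w) :
    ∑ v ∈ τ, (-1) ^ #{x ∈ τ | x < v} * assocCochain A (τ.erase v) = 0 := by
  have hne := huw.ne
  have hcard : ∀ v ∈ τ, #(τ.erase v) ≤ k := fun v hv => by rw [card_erase_of_mem hv, hτ]; rfl
  have hrest : ∀ v ∈ τ, v ∉ ({u, w} : Finset V) →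
      (-1) ^ #{x ∈ τ | x < v} * assocCochain A (τ.erase v) = 0 := by
    intro v hv hvuw
    simp only [mem_insert, mem_singleton, not_or] at hvuw
    rw [assocCochain_eq_zero_of_not_injOn hA (hcard v hv) fun hinj =>
      hne (hinj (mem_erase.mpr ⟨Ne.symm hvuw.1, hu⟩) (mem_erase.mpr ⟨Ne.symm hvuw.2, hw⟩) hp),
      mul_zero]
  have hsame : assocCochain A (τ.erase u) = assocCochain A (τ.erase w) :=
    assocCochain_congr_image hA ((image_erase_eq_of_apply_eq hw hne hp).trans
      (image_erase_eq_of_apply_eq hu hne.symm hp.symm).symm)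
  rw [← sum_subset (insert_subset hu (singleton_subset_iff.mpr hw)) hrest, sum_pair hne, hsame]
  by_cases hzero : assocCochain A (τ.erase w) = 0
  · rw [hzero, mul_zero, mul_zero, add_zero]
  -- A nonzero value makes `part` injective on `τ.erase u`, while a vertex of `τ` strictly
  -- between `u` and `w` would lie in their part: so `u` and `w` are adjacent in `τ`.
  have hinj : Set.InjOn hA.part (τ.erase u) := by
    by_contra h
    exact hzero (hsame ▸ assocCochain_eq_zero_of_not_injOn hA (hcard u hu) h)
  have hmono := hord.monotone_part hA
  have hgap : ∀ x ∈ τ, u < x → w ≤ x := fun x hx hux => not_lt.mp fun hxw =>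
    hxw.ne (hinj (mem_erase.mpr ⟨hux.ne', hx⟩) (mem_erase.mpr ⟨hne.symm, hw⟩)
      (le_antisymm (hmono hxw.le) (by rw [← hp]; exact hmono hux.le)))
  rw [card_filter_lt_eq_succ_of_adjacent hu huw hgap, pow_succ]
  ring

theorem delta_assocCochain [Fintype V] {X : Finset (Finset V)} (hX : IsComplex X)
    (hA : IsPartition A) (hord : OrderAdapted A) {τ : Finset V} (hτX : τ ∈ X)
    (hτ : #τ = k + 1) :
    delta X k (assocCochain A) τ = if ∀ i, #(τ ∩ A i) = 1 then (Fintype.card V : ℝ) else 0 := by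
  rw [delta_eq_sum_erase hX hτX hτ]
  split_ifs with hrainbow
  · exact sum_erase_assocCochain_of_injOn hA hord hτ ((hA.injOn_part_iff hτ).mpr hrainbow)
  · obtain ⟨u, hu, w, hw, hp, hne⟩ : ∃ u ∈ τ, ∃ w ∈ τ, hA.part u = hA.part w ∧ u ≠ w := by
      by_contra! h
      exact hrainbow ((hA.injOn_part_iff hτ).mp fun u hu w hw => h u hu w hw)
    rcases hne.lt_or_gt with huw | hwu
    · exact sum_erase_assocCochain_of_collision hA hord hτ hu hw huw hp
    · exact sum_erase_assocCochain_of_collision hA hord hτ hw hu hwu hp.symm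

end AssocCochain

theorem lapUp_assocCochain_inner_general
    {V : Type*} [DecidableEq V] [Fintype V] [LinearOrder V]
    (X : Finset (Finset V)) (k : ℕ)
    (hX : IsComplex X)
    (A : Fin (k + 1) → Finset V) (hA : IsPartition A) (hord : OrderAdapted A) :
    inn X k (lapUp X k (assocCochain A)) (assocCochain A)
      = inn X (k + 1) (delta X k (assocCochain A)) (delta X k (assocCochain A)) ∧
    inn X (k + 1) (delta X k (assocCochain A)) (delta X k (assocCochain A))
      = (Fintype.card V : ℝ) ^ 2 * ((Fset X k A).card : ℝ) := by
  refine ⟨inn_lapUp_self X k _, ?_⟩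
  have hsq : ∀ τ ∈ faces X (k + 1),
      delta X k (assocCochain A) τ * delta X k (assocCochain A) τ
        = if ∀ i, #(τ ∩ A i) = 1 then (Fintype.card V : ℝ) ^ 2 else 0 := by
    intro τ hτ
    obtain ⟨hτX, hτc⟩ := mem_filter.mp hτ
    rw [delta_assocCochain hX hA hord hτX hτc]
    split_ifs <;> ring
  rw [inn, sum_congr rfl hsq, ← sum_filter, sum_const, nsmul_eq_mul, mul_comm, Fset]

/-- **Lemma 1.6 (Parzanchevski et al.).**  Let `X` be any `k`-dimensional complex, `A` a
partition of `V` into `k+1` nonempty parts and `f` the associated cochain (w.r.t. a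
partition-adapted order).  Then
`⟨L^up_{k-1}(X) f, f⟩ = ⟨δ_{k-1} f, δ_{k-1} f⟩ = |V|²·|F(A_0,…,A_k)|`. -/
theorem lapUp_assocCochain_inner
    {V : Type*} [DecidableEq V] [Fintype V] [LinearOrder V]
    (X : Finset (Finset V)) (k : ℕ)
    (hX : IsComplex X) (hdim : IsDim X k)
    (A : Fin (k + 1) → Finset V) (hA : IsPartition A) (hord : OrderAdapted A) :
    inn X k (lapUp X k (assocCochain A)) (assocCochain A)
      = inn X (k + 1) (delta X k (assocCochain A)) (delta X k (assocCochain A)) ∧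
    inn X (k + 1) (delta X k (assocCochain A)) (delta X k (assocCochain A))
      = (Fintype.card V : ℝ) ^ 2 * ((Fset X k A).card : ℝ) :=
  lapUp_assocCochain_inner_general X k hX A hA hord

end HigherCheeger
end

section
/- Let X be a k-dimensional simplicial complex on a finite vertex set V, let V = A_0 ⊔ … ⊔ A_k be a partition into nonempty parts, and let f ∈ C^{k−1}(X;ℝ) be the associated cochain (with the partition-adapted linear order on V). For τ ∈ F^∂(A_0,…,A_k) and g ∈ C^{k−2}(X;ℝ), define q(τ,g) = Σ over k-element subsets σ of τ (all of which lie in X_{k−1}, and satisfy d(σ) ≥ 1) of (1/d(σ))·(f(σ) − (δ_{k−2}g)(σ))². Then for every g ∈ C^{k−2}(X;ℝ): ‖f − δ_{k−2}g‖² ≥ Σ_{τ ∈ F^∂(A_0,…,A_k)} q(τ,g). -/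
open Finset

/-!
Every facet of a member of `F^∂` lies in `X` (by downward closure, or by the definition of
`K(X)`), so double counting rewrites the left-hand side as `∑_σ d(σ) · (1/d(σ)) · h(σ)²`
with `h = f - δg`; and `d · (1/d) ≤ 1`, with equality unless `d = 0`.
-/

namespace HigherCheeger

variable {V : Type*} [DecidableEq V]

lemma erase_mem_of_mem_completion [Fintype V] {X : Finset (Finset V)} (hX : IsComplex X)
    {k : ℕ} {τ : Finset V} (hτ : τ ∈ completion X k) {v : V} (hv : v ∈ τ) : τ.erase v ∈ X := by
  rcases mem_union.mp hτ with hτX | hτnew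
  · exact hX τ hτX _ (erase_subset _ _)
  · exact (mem_filter.mp hτnew).2.2 v hv

lemma filter_faces_subset_eq_image_erase {X : Finset (Finset V)} {c : ℕ} {τ : Finset V}
    (hτ : #τ = c + 1) (herase : ∀ v ∈ τ, τ.erase v ∈ X) :
    {σ ∈ faces X c | σ ⊆ τ} = τ.image τ.erase := by
  ext σ
  have hshadow : σ ∈ τ.image τ.erase ↔ σ ⊆ τ ∧ #τ = #σ + 1 := by
    simpa [shadow] using mem_shadow_iff_exists_mem_card_add_one (𝒜 := {τ}) (t := σ)
  rw [hshadow, mem_filter, faces, mem_filter]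
  constructor
  · rintro ⟨⟨-, hσ⟩, hστ⟩
    exact ⟨hστ, by omega⟩
  · intro hσ
    obtain ⟨v, hv, rfl⟩ := mem_image.mp (hshadow.mpr hσ)
    exact ⟨⟨herase v hv, by omega⟩, hσ.1⟩

lemma sum_sum_erase_eq_sum_faces_card_mul {X T : Finset (Finset V)} {c : ℕ}
    (hT : ∀ τ ∈ T, #τ = c + 1 ∧ ∀ v ∈ τ, τ.erase v ∈ X) (F : Finset V → ℝ) :
    ∑ τ ∈ T, ∑ v ∈ τ, F (τ.erase v) = ∑ σ ∈ faces X c, (#{τ ∈ T | σ ⊆ τ} : ℝ) * F σ := by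
  calc ∑ τ ∈ T, ∑ v ∈ τ, F (τ.erase v)
      = ∑ τ ∈ T, ∑ σ ∈ faces X c with σ ⊆ τ, F σ := by
        refine sum_congr rfl fun τ hτ => ?_
        rw [filter_faces_subset_eq_image_erase (hT τ hτ).1 (hT τ hτ).2,
          sum_image τ.erase_injOn]
    _ = ∑ σ ∈ faces X c, ∑ τ ∈ T with σ ⊆ τ, F σ :=
        sum_comm' fun _ _ => by simp only [mem_filter]; tauto
    _ = ∑ σ ∈ faces X c, (#{τ ∈ T | σ ⊆ τ} : ℝ) * F σ := by
        simp only [sum_const, nsmul_eq_mul]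

lemma natCast_mul_one_div_mul_sq_le (n : ℕ) (x : ℝ) : n * (1 / n * x ^ 2) ≤ x * x := by
  rcases eq_or_ne (n : ℝ) 0 with hn | hn
  · rw [hn, zero_mul]
    exact mul_self_nonneg x
  · rw [← mul_assoc, mul_one_div_cancel hn, one_mul, sq]

theorem norm_sub_delta_ge_sum_q_general
    {V : Type*} [DecidableEq V] [Fintype V] [LinearOrder V]
    (X : Finset (Finset V)) (k : ℕ)
    (hX : IsComplex X)
    (A : Fin (k + 1) → Finset V)
    (g : Finset V → ℝ) :
    ∑ τ ∈ Fpar X k A, ∑ v ∈ τ,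
        (1 / (degPar X k A (τ.erase v) : ℝ)) *
          (assocCochain A (τ.erase v) - delta X (k - 1) g (τ.erase v)) ^ 2
      ≤ inn X k (fun σ => assocCochain A σ - delta X (k - 1) g σ)
            (fun σ => assocCochain A σ - delta X (k - 1) g σ) := by
  have hFpar : ∀ τ ∈ Fpar X k A, #τ = k + 1 ∧ ∀ v ∈ τ, τ.erase v ∈ X := fun τ hτ =>
    have hτK := mem_filter.mp (mem_filter.mp hτ).1
    ⟨hτK.2, fun _ hv => erase_mem_of_mem_completion hX hτK.1 hv⟩
  rw [sum_sum_erase_eq_sum_faces_card_mul hFpar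
    (fun σ => 1 / (degPar X k A σ : ℝ) * (assocCochain A σ - delta X (k - 1) g σ) ^ 2), inn]
  exact sum_le_sum fun σ _ => natCast_mul_one_div_mul_sq_le (degPar X k A σ) _

/-- **Lemma 2.2 a).**  Let `X` be a `k`-dimensional complex, `A` a partition of `V` into
`k+1` nonempty parts and `f` the associated cochain (w.r.t. a partition-adapted order).
For `τ ∈ F^∂(A_0,…,A_k)` and `g ∈ C^{k-2}(X;ℝ)` let
`q(τ,g) = ∑_{σ ⊂ τ, |σ| = k} (1/d(σ))·(f(σ) - (δ_{k-2}g)(σ))²`.  Then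
`‖f - δ_{k-2}g‖² ≥ ∑_{τ ∈ F^∂} q(τ,g)`. -/
theorem norm_sub_delta_ge_sum_q
    {V : Type*} [DecidableEq V] [Fintype V] [LinearOrder V]
    (X : Finset (Finset V)) (k : ℕ)
    (hX : IsComplex X) (hdim : IsDim X k)
    (A : Fin (k + 1) → Finset V) (hA : IsPartition A) (hord : OrderAdapted A)
    (g : Finset V → ℝ) :
    ∑ τ ∈ Fpar X k A, ∑ v ∈ τ,
        (1 / (degPar X k A (τ.erase v) : ℝ)) *
          (assocCochain A (τ.erase v) - delta X (k - 1) g (τ.erase v)) ^ 2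
      ≤ inn X k (fun σ => assocCochain A σ - delta X (k - 1) g σ)
            (fun σ => assocCochain A σ - delta X (k - 1) g σ) :=
  norm_sub_delta_ge_sum_q_general X k hX A g

end HigherCheeger
end

section
/- Let X be a k-dimensional simplicial complex on a finite vertex set V and let V = A_0 ⊔ A_1 ⊔ … ⊔ A_k be a partition into nonempty parts. Let 1_F ∈ C^{k−1}(X;Z₂) be the indicator cochain of F(A_0,…,A_{k−1}). Then the support of the Z₂-coboundary δ_X 1_F — i.e. the set of k-faces of X having an odd number of (k−1)-faces in F(A_0,…,A_{k−1}) — equals F(A_0,…,A_k); moreover, the support of δ_{K(X)} 1_F, computed in the completion K(X), equals F^∂(A_0,…,A_k). -/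
/-! Sort the terms `1_F(τ ∖ v)` of `δ 1_F (τ)` by the part `A_j` containing `v`, and put
`c_j = |τ ∩ A_j|`. Whether `τ ∖ v` meets each of `A_0, …, A_{k-1}` exactly once depends only
on `j`: it means that `c - e_j` equals `1` on the first `k` coordinates. Hence part `j`
contributes `c_j` or nothing. For `j < k` a contribution forces `c_j = 2`, which is even; for
`j = k`, since `∑ c_j = |τ| = k + 1`, a contribution happens exactly when `τ` meets every part
once, and then it is `c_k = 1`. -/

open Finset

namespace HigherCheeger

variable {V : Type*}

theorem zmod_two_sum_ite_sub_single_eq_ite {k : ℕ} (c : Fin (k + 1) → ℕ)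
    (hc : ∑ j, c j = k + 1) :
    ∑ j, (if ∀ i : Fin k, (c - Pi.single j 1 : Fin (k + 1) → ℕ) i.castSucc = 1
        then (c j : ZMod 2) else 0) = if ∀ j, c j = 1 then 1 else 0 := by
  have hlow (j : Fin k) :
      (if ∀ i : Fin k, (c - Pi.single j.castSucc 1 : Fin (k + 1) → ℕ) i.castSucc = 1
        then (c j.castSucc : ZMod 2) else 0) = 0 := by
    split_ifs with h
    · have h2 : c j.castSucc = 2 := by simpa using h j
      rw [h2]
      rfl
    · rfl
  have hlast :
      (∀ i : Fin k, (c - Pi.single (Fin.last k) 1 : Fin (k + 1) → ℕ) i.castSucc = 1) ↔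
        ∀ j, c j = 1 := by
    simp only [Pi.sub_apply, Pi.single_apply, Fin.castSucc_ne_last, if_false, Nat.sub_zero]
    refine ⟨fun h j => ?_, fun h i => h _⟩
    rw [Fin.sum_univ_castSucc] at hc
    simp only [h, Finset.sum_const, Finset.card_univ, Fintype.card_fin, smul_eq_mul,
      mul_one] at hc
    exact Fin.lastCases (by omega) h j
  rw [Fin.sum_univ_castSucc, Finset.sum_eq_zero fun j _ => hlow j, zero_add]
  by_cases h : ∀ j, c j = 1
  · rw [if_pos (hlast.2 h), if_pos h, h]
    rfl
  · rw [if_neg (mt hlast.1 h), if_neg h]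

namespace IsPartition

variable {m : ℕ} {A : Fin m → Finset V}

theorem eq_of_mem (hA : IsPartition A) {v : V} {i j : Fin m} (hi : v ∈ A i) (hj : v ∈ A j) :
    i = j :=
  (hA.2 v).unique hi hj

variable [DecidableEq V]

theorem sum_sum_inter {M : Type*} [AddCommMonoid M] (hA : IsPartition A) (τ : Finset V)
    (g : V → M) : ∑ j, ∑ v ∈ τ ∩ A j, g v = ∑ v ∈ τ, g v := by
  rw [← Finset.sum_biUnion]
  · congr 1
    ext v
    simpa using fun _ => (hA.2 v).exists
  · intro i _ j _ hij
    exact Finset.disjoint_left.2 fun v hvi hvj =>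
      hij (hA.eq_of_mem (Finset.mem_inter.1 hvi).2 (Finset.mem_inter.1 hvj).2)

theorem sum_card_inter (hA : IsPartition A) (τ : Finset V) :
    ∑ j, (τ ∩ A j).card = τ.card := by
  simpa only [Finset.card_eq_sum_ones] using hA.sum_sum_inter τ fun _ => 1

theorem card_erase_inter (hA : IsPartition A) {τ : Finset V} {v : V} {j : Fin m}
    (hv : v ∈ τ ∩ A j) (i : Fin m) :
    (τ.erase v ∩ A i).card =
      ((fun l => (τ ∩ A l).card) - Pi.single j 1 : Fin m → ℕ) i := by
  rw [Finset.erase_inter, Pi.sub_apply, Pi.single_apply]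
  split_ifs with hij
  · subst hij
    exact Finset.card_erase_of_mem hv
  · refine congrArg Finset.card (Finset.erase_eq_of_notMem fun hvi => hij ?_)
    exact hA.eq_of_mem (Finset.mem_inter.1 hvi).2 (Finset.mem_inter.1 hv).2

end IsPartition

variable [DecidableEq V]

theorem deltaZ2_indicator_FsetLow {X : Finset (Finset V)} {k : ℕ}
    {A : Fin (k + 1) → Finset V} (hA : IsPartition A) {τ : Finset V}
    (hτ : τ.card = k + 1) (hfacets : ∀ v ∈ τ, τ.erase v ∈ X) :
    deltaZ2 (fun σ => if σ ∈ FsetLow X k (fun i : Fin k => A i.castSucc) then 1 else 0) τ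
      = if ∀ i, (τ ∩ A i).card = 1 then 1 else 0 := by
  set c : Fin (k + 1) → ℕ := fun l => (τ ∩ A l).card
  have hpart (j : Fin (k + 1)) :
      ∑ v ∈ τ ∩ A j,
          (if τ.erase v ∈ FsetLow X k (fun i : Fin k => A i.castSucc) then (1 : ZMod 2) else 0)
        = if ∀ i : Fin k, (c - Pi.single j 1 : Fin (k + 1) → ℕ) i.castSucc = 1
          then (c j : ZMod 2) else 0 := by
    have hv_val : ∀ v ∈ τ ∩ A j,
        (if τ.erase v ∈ FsetLow X k (fun i : Fin k => A i.castSucc) then (1 : ZMod 2) else 0)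
          = if ∀ i : Fin k, (c - Pi.single j 1 : Fin (k + 1) → ℕ) i.castSucc = 1
            then 1 else 0 := by
      intro v hv
      have hvτ := (Finset.mem_inter.1 hv).1
      simp only [FsetLow, faces, Finset.mem_filter, hfacets v hvτ, Finset.card_erase_of_mem hvτ,
        hτ, add_tsub_cancel_right, true_and, hA.card_erase_inter hv, c]
    rw [Finset.sum_congr rfl hv_val, Finset.sum_const, nsmul_eq_mul, mul_ite, mul_one, mul_zero]
  rw [deltaZ2, ← hA.sum_sum_inter, Finset.sum_congr rfl fun j _ => hpart j]
  exact zmod_two_sum_ite_sub_single_eq_ite c (hA.sum_card_inter τ ▸ hτ)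

theorem suppDelta_indicator_FsetLow {X Y : Finset (Finset V)} {k : ℕ}
    {A : Fin (k + 1) → Finset V} (hA : IsPartition A)
    (hY : ∀ τ ∈ faces Y (k + 1), ∀ v ∈ τ, τ.erase v ∈ X) :
    suppDelta Y k (fun σ => if σ ∈ FsetLow X k (fun i : Fin k => A i.castSucc) then 1 else 0)
      = (faces Y (k + 1)).filter fun τ => ∀ i, (τ ∩ A i).card = 1 := by
  refine Finset.filter_congr fun τ hτ => ?_
  rw [deltaZ2_indicator_FsetLow hA (Finset.mem_filter.1 hτ).2 (hY τ hτ)]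
  split_ifs <;> simp_all

theorem IsComplex.erase_mem {X : Finset (Finset V)} (hX : IsComplex X) {τ : Finset V}
    (hτ : τ ∈ X) (v : V) : τ.erase v ∈ X :=
  hX τ hτ _ (Finset.erase_subset v τ)

theorem erase_mem_of_mem_faces_completion [Fintype V] {X : Finset (Finset V)} {k : ℕ}
    (hX : IsComplex X) {τ : Finset V} (hτ : τ ∈ faces (completion X k) (k + 1))
    (v : V) (hv : v ∈ τ) :
    τ.erase v ∈ X := by
  rcases Finset.mem_union.1 (Finset.mem_filter.1 hτ).1 with hτX | hτK
  · exact hX.erase_mem hτX v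
  · exact (Finset.mem_filter.1 hτK).2.2 v hv

theorem suppDelta_indicator_eq_Fset_general
    {V : Type*} [DecidableEq V] [Fintype V]
    (X : Finset (Finset V)) (k : ℕ)
    (hX : IsComplex X)
    (A : Fin (k + 1) → Finset V) (hA : IsPartition A) :
    suppDelta X k
        (fun σ => if σ ∈ FsetLow X k (fun i : Fin k => A i.castSucc) then 1 else 0)
      = Fset X k A ∧
    suppDelta (completion X k) k
        (fun σ => if σ ∈ FsetLow X k (fun i : Fin k => A i.castSucc) then 1 else 0)
      = Fpar X k A :=
  ⟨suppDelta_indicator_FsetLow hA fun _ hτ v _ => hX.erase_mem (Finset.mem_filter.1 hτ).1 v,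
    suppDelta_indicator_FsetLow hA fun _ hτ => erase_mem_of_mem_faces_completion hX hτ⟩

/-- For a partition `V = A_0 ⊔ … ⊔ A_k`, the support of the `Z₂`-coboundary (in `X`) of
the indicator cochain of `F(A_0,…,A_{k-1})` is exactly `F(A_0,…,A_k)`, and its support
in the completion `K(X)` is exactly `F^∂(A_0,…,A_k)`. -/
theorem suppDelta_indicator_eq_Fset
    {V : Type*} [DecidableEq V] [Fintype V] [LinearOrder V]
    (X : Finset (Finset V)) (k : ℕ)
    (hX : IsComplex X) (hdim : IsDim X k)
    (A : Fin (k + 1) → Finset V) (hA : IsPartition A) :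
    suppDelta X k
        (fun σ => if σ ∈ FsetLow X k (fun i : Fin k => A i.castSucc) then 1 else 0)
      = Fset X k A ∧
    suppDelta (completion X k) k
        (fun σ => if σ ∈ FsetLow X k (fun i : Fin k => A i.castSucc) then 1 else 0)
      = Fpar X k A :=
  suppDelta_indicator_eq_Fset_general X k hX A hA

end HigherCheeger
end
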